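/- arXiv:2505.13347 — 7 statements merged into one kernel-verified Lean document; each statement's English description precedes it below -/
import Mathlib

section
/- Every left ℓ-group is torsion-free. That is, if G is a group with a left-invariant partial order that is a lattice, and g ∈ G satisfies g^n = e for some n > 0, then g = e. -/
private def llgAux {G : Type*} [Group G] [Lattice G] (g : G) : ℕ → G
  | 0 => 1
  | k + 1 => g * llgAux g k ⊔ 1

private lemma llgAux_shift {G : Type*} [Group G] [Lattice G]
    [CovariantClass G G (· * ·) (· ≤ ·)] (g : G) :
    ∀ k : ℕ, llgAux g (k + 1) = llgAux g k ⊔ g ^ (k + 1)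
  | 0 => by simp [llgAux, sup_comm]
  | k + 1 => by
    have ih := llgAux_shift g k
    calc llgAux g (k + 2) = g * llgAux g (k + 1) ⊔ 1 := rfl
      _ = g * (llgAux g k ⊔ g ^ (k + 1)) ⊔ 1 := by rw [ih]
      _ = (g * llgAux g k ⊔ g * g ^ (k + 1)) ⊔ 1 := by rw [mul_sup]
      _ = (g * llgAux g k ⊔ 1) ⊔ g ^ (k + 2) := by
          rw [sup_assoc, sup_assoc, sup_comm (g * g ^ (k + 1)) 1, ← pow_succ']
      _ = llgAux g (k + 1) ⊔ g ^ (k + 2) := rfl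

/-- Every left ℓ-group (group with a left-invariant lattice order) is torsion-free. -/
theorem left_l_group_torsion_free {G : Type*} [Group G] [Lattice G]
    [CovariantClass G G (· * ·) (· ≤ ·)]
    (g : G) (n : ℕ) (hn : 0 < n) (h : g ^ n = 1) : g = 1 := by
  obtain ⟨m, rfl⟩ : ∃ m, n = m + 1 := ⟨n - 1, (Nat.succ_pred_eq_of_pos hn).symm⟩
  cases m with
  | zero => simpa using h
  | succ k =>
    have key : g * llgAux g (k + 1) = llgAux g (k + 1) := by
      calc g * llgAux g (k + 1) = g * (llgAux g k ⊔ g ^ (k + 1)) := by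
            rw [llgAux_shift]
        _ = g * llgAux g k ⊔ g * g ^ (k + 1) := mul_sup _ _ _
        _ = g * llgAux g k ⊔ 1 := by rw [← pow_succ', h]
        _ = llgAux g (k + 1) := rfl
    have := key
    nth_rewrite 2 [← one_mul (llgAux g (k + 1))] at this
    exact mul_right_cancel this
end

section
/- If G is a noetherian left ℓ-group, then the positive cone G^+ is generated as a monoid by the set of atoms At(G), and G is generated as a group by At(G). -/
/-- In a noetherian left ℓ-group, the positive cone is generated as a monoid by
the atoms, and the whole group is generated as a group by the atoms. -/
theorem noetherian_l_group_generated_by_atoms {G : Type*} [Group G] [Lattice G]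
    [CovariantClass G G (· * ·) (· ≤ ·)]
    (hasc : ∀ f : ℕ → G, (∀ n, f n ≤ f (n + 1)) → (∀ n, f n ≤ 1) →
      ∃ N, ∀ n, N ≤ n → f n = f N)
    (hdesc : ∀ f : ℕ → G, (∀ n, f (n + 1) ≤ f n) → (∀ n, 1 ≤ f n) →
      ∃ N, ∀ n, N ≤ n → f n = f N) :
    (∀ g : G, 1 ≤ g ↔ g ∈ Submonoid.closure {x : G | (1 : G) ⋖ x}) ∧
      Subgroup.closure {x : G | (1 : G) ⋖ x} = ⊤ := by
  classical
  set M := Submonoid.closure {x : G | (1 : G) ⋖ x} with hMdef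
  -- every nonempty set of elements > 1 has a minimal element
  have hmin : ∀ T : Set G, (∀ a ∈ T, (1:G) < a) → T.Nonempty →
      ∃ x ∈ T, ∀ y ∈ T, ¬ y < x := by
    intro T hT ht
    obtain ⟨t, ht⟩ := ht
    by_contra h
    push_neg at h
    have step : ∀ a : {a // a ∈ T}, ∃ b : {a // a ∈ T}, (b:G) < (a:G) := by
      rintro ⟨a, ha⟩
      obtain ⟨y, hy, hlt⟩ := h a ha
      exact ⟨⟨y, hy⟩, hlt⟩
    choose st hst using step
    set f : ℕ → {a // a ∈ T} := fun n => st^[n] ⟨t, ht⟩ with hf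
    have hdec : ∀ n, ((f (n+1) : G)) < (f n : G) := by
      intro n
      rw [hf]
      simp only [Function.iterate_succ_apply']
      exact hst _
    obtain ⟨N, hN⟩ := hdesc (fun n => (f n : G)) (fun n => (hdec n).le)
      (fun n => (hT _ (f n).2).le)
    exact absurd (hN (N+1) (by omega)) (hdec N).ne
  -- positive elements are in the monoid closure of atoms
  have pos_mem : ∀ g : G, 1 ≤ g → g ∈ M := by
    by_contra h
    push_neg at h
    obtain ⟨g₀, hg₀le, hg₀⟩ := h
    set S : Set G := {g | 1 ≤ g ∧ g ∉ M} with hS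
    have step : ∀ a : {a // a ∈ S}, ∃ b : {a // a ∈ S}, (a:G)⁻¹ < (b:G)⁻¹ := by
      rintro ⟨g, hg1, hgM⟩
      have hg : (1:G) < g := lt_of_le_of_ne hg1 (fun e => hgM (e ▸ M.one_mem))
      obtain ⟨x, hxT, hxmin⟩ := hmin {a | 1 < a ∧ a ≤ g}
        (fun a ha => ha.1) ⟨g, hg, le_refl g⟩
      obtain ⟨hx1, hxg⟩ := hxT
      have hatom : (1:G) ⋖ x :=
        ⟨hx1, fun y hy hyx => hxmin y ⟨hy, hyx.le.trans hxg⟩ hyx⟩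
      have hxM : x ∈ M := Submonoid.subset_closure hatom
      have h1 : (1:G) ≤ x⁻¹ * g := by
        have := mul_le_mul_right hxg x⁻¹
        simpa using this
      have h2 : x⁻¹ * g ∉ M := by
        intro hm
        have : x * (x⁻¹ * g) ∈ M := M.mul_mem hxM hm
        rw [mul_inv_cancel_left] at this
        exact hgM this
      refine ⟨⟨x⁻¹ * g, h1, h2⟩, ?_⟩
      have hlt : g⁻¹ * 1 < g⁻¹ * x := by
        apply lt_of_le_of_ne (mul_le_mul_right hx1.le g⁻¹)
        intro e
        exact hx1.ne' (mul_left_cancel e).symm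
      simpa [mul_inv_rev] using hlt
    choose st hst using step
    set f : ℕ → {a // a ∈ S} := fun n => st^[n] ⟨g₀, hg₀le, hg₀⟩ with hf
    have hinc : ∀ n, ((f n : G))⁻¹ < ((f (n+1) : G))⁻¹ := by
      intro n
      rw [hf]
      simp only [Function.iterate_succ_apply']
      exact hst _
    obtain ⟨N, hN⟩ := hasc (fun n => ((f n : G))⁻¹) (fun n => (hinc n).le)
      (fun n => Left.inv_le_one_iff.mpr (f n).2.1)
    exact absurd (hN (N+1) (by omega)) (hinc N).ne'
  -- elements of the closure are positive
  have mem_pos : ∀ g ∈ M, (1:G) ≤ g := by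
    intro g hg
    induction hg using Submonoid.closure_induction with
    | mem x hx => exact hx.1.le
    | one => exact le_refl 1
    | mul a b _ _ ha hb =>
        calc (1:G) ≤ a := ha
        _ = a * 1 := (mul_one a).symm
        _ ≤ a * b := mul_le_mul_right hb a
  constructor
  · exact fun g => ⟨pos_mem g, mem_pos g⟩
  · rw [eq_top_iff]
    intro g _
    set a := g ⊔ 1 with ha
    have haM : a ∈ M := pos_mem a le_sup_right
    have hb : a⁻¹ * g ≤ 1 := by
      have := mul_le_mul_right (le_sup_left : g ≤ a) a⁻¹
      rwa [inv_mul_cancel] at this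
    have hbM : (a⁻¹ * g)⁻¹ ∈ M := pos_mem _ (Left.one_le_inv_iff.mpr hb)
    have hsub : M ≤ (Subgroup.closure {x : G | (1 : G) ⋖ x}).toSubmonoid :=
      Submonoid.closure_le.mpr Subgroup.subset_closure
    have h1 : a ∈ Subgroup.closure {x : G | (1 : G) ⋖ x} := hsub haM
    have h2 : (a⁻¹ * g)⁻¹ ∈ Subgroup.closure {x : G | (1 : G) ⋖ x} := hsub hbM
    have : a * (a⁻¹ * g) ∈ Subgroup.closure {x : G | (1 : G) ⋖ x} :=
      mul_mem h1 ((Subgroup.inv_mem_iff _).mp h2)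
    simpa using this
end

section
/- Let G be a rigid left ℓ-group and let φ be an automorphism of the partially ordered set (G, ≤) such that φ(x) = x for every atom x of G. Then φ(g) = g for all g in the positive cone G^+. -/
set_option linter.unusedSectionVars false

section Aux
variable {G : Type*} [Group G] [Lattice G] [CovariantClass G G (· * ·) (· ≤ ·)]

private lemma mulLeft_covBy (c : G) {a b : G} (h : a ⋖ b) : c * a ⋖ c * b := by
  have := (apply_covBy_apply_iff (OrderIso.mulLeft c)).2 h
  simpa using this

private lemma covBy_one_mul {c d : G} (h : c ⋖ d) : (1 : G) ⋖ c⁻¹ * d := by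
  have := mulLeft_covBy c⁻¹ h
  simpa using this

/-- products of `n` atoms -/
def IsProdAtoms : ℕ → G → Prop
  | 0, g => g = 1
  | (n+1), g => ∃ h a, IsProdAtoms n h ∧ (1 : G) ⋖ a ∧ g = h * a

private lemma isProdAtoms_prepend {x : G} (hx : (1 : G) ⋖ x) :
    ∀ n (h : G), IsProdAtoms n h → IsProdAtoms (n+1) (x * h) := by
  intro n
  induction n with
  | zero => intro h hh; subst hh; exact ⟨1, x, rfl, hx, by simp⟩
  | succ m ih =>
      rintro h ⟨h', a, hh', ha, rfl⟩
      exact ⟨x * h', a, ih h' hh', ha, by rw [mul_assoc]⟩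

private lemma exists_atom_le
    (hdesc : ∀ f : ℕ → G, (∀ n, f (n + 1) ≤ f n) → (∀ n, 1 ≤ f n) →
      ∃ N, ∀ n, N ≤ n → f n = f N)
    {g : G} (hg : 1 < g) : ∃ x : G, (1 : G) ⋖ x ∧ x ≤ g := by
  by_contra hc
  push_neg at hc
  have step : ∀ p : {h : G // 1 < h ∧ h ≤ g}, {q : {h : G // 1 < h ∧ h ≤ g} // q.1 < p.1} := by
    rintro ⟨h, h1, h2⟩
    have hnc : ¬ (1 : G) ⋖ h := fun hcov => hc h hcov h2
    have hex := (not_covBy_iff h1).1 hnc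
    exact ⟨⟨hex.choose, hex.choose_spec.1, hex.choose_spec.2.le.trans h2⟩, hex.choose_spec.2⟩
  let f : ℕ → {h : G // 1 < h ∧ h ≤ g} := fun n => Nat.rec ⟨g, hg, le_refl g⟩ (fun _ p => (step p).1) n
  have hstep : ∀ n, (f (n+1)).1 < (f n).1 := fun n => (step (f n)).2
  obtain ⟨N, hN⟩ := hdesc (fun n => (f n).1) (fun n => (hstep n).le) (fun n => (f n).2.1.le)
  exact absurd (hN (N+1) (Nat.le_succ N)) (ne_of_lt (hstep N))

private lemma exists_isProdAtoms
    (hasc : ∀ f : ℕ → G, (∀ n, f n ≤ f (n + 1)) → (∀ n, f n ≤ 1) →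
      ∃ N, ∀ n, N ≤ n → f n = f N)
    (hdesc : ∀ f : ℕ → G, (∀ n, f (n + 1) ≤ f n) → (∀ n, 1 ≤ f n) →
      ∃ N, ∀ n, N ≤ n → f n = f N)
    {g : G} (hg : 1 ≤ g) : ∃ N, IsProdAtoms N g := by
  by_contra hc
  push_neg at hc
  have step : ∀ p : {h : G // 1 ≤ h ∧ ∀ N, ¬ IsProdAtoms N h},
      {q : {h : G // 1 ≤ h ∧ ∀ N, ¬ IsProdAtoms N h} // p.1⁻¹ < q.1⁻¹} := by
    rintro ⟨h, h1, h2⟩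
    have hne : h ≠ 1 := by
      intro he; exact h2 0 (by simpa [IsProdAtoms] using he)
    have hlt : 1 < h := lt_of_le_of_ne h1 (Ne.symm hne)
    have hex := exists_atom_le hdesc hlt
    set x := hex.choose with hxdef
    have hx : (1:G) ⋖ x := hex.choose_spec.1
    have hxle : x ≤ h := hex.choose_spec.2
    refine ⟨⟨x⁻¹ * h, ?_, ?_⟩, ?_⟩
    · have := mul_le_mul_right hxle x⁻¹
      simpa using this
    · intro N hN
      have := isProdAtoms_prepend hx N _ hN
      rw [mul_inv_cancel_left] at this
      exact h2 (N+1) this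
    · show h⁻¹ < (x⁻¹ * h)⁻¹
      have hx1 : (1 : G) < x := hx.1
      have : h⁻¹ * 1 < h⁻¹ * x := (OrderIso.mulLeft h⁻¹).lt_iff_lt.2 hx1
      simpa [mul_inv_rev] using this
  let f : ℕ → {h : G // 1 ≤ h ∧ ∀ N, ¬ IsProdAtoms N h} :=
    fun n => Nat.rec ⟨g, hg, hc⟩ (fun _ p => (step p).1) n
  have hstep : ∀ n, (f n).1⁻¹ < (f (n+1)).1⁻¹ := fun n => (step (f n)).2
  have hle1 : ∀ n, (f n).1⁻¹ ≤ 1 := by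
    intro n
    have h1 : (1 : G) ≤ (f n).1 := (f n).2.1
    have := mul_le_mul_right h1 (f n).1⁻¹
    simpa using this
  obtain ⟨N, hN⟩ := hasc (fun n => (f n).1⁻¹) (fun n => (hstep n).le) hle1
  exact absurd (hN (N+1) (Nat.le_succ N)) (ne_of_gt (hstep N))

end Aux

/-- In a rigid left ℓ-group, an order-automorphism fixing all atoms fixes the
whole positive cone pointwise. -/
theorem rigidity_of_positive_cone {G : Type*} [Group G] [Lattice G]
    [CovariantClass G G (· * ·) (· ≤ ·)]
    -- noetherianity
    (hasc : ∀ f : ℕ → G, (∀ n, f n ≤ f (n + 1)) → (∀ n, f n ≤ 1) →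
      ∃ N, ∀ n, N ≤ n → f n = f N)
    (hdesc : ∀ f : ℕ → G, (∀ n, f (n + 1) ≤ f n) → (∀ n, 1 ≤ f n) →
      ∃ N, ∀ n, N ≤ n → f n = f N)
    -- rigidity condition (1)
    (rig1 : ∀ x y : G, (1 : G) ⋖ x → (1 : G) ⋖ y → x ≠ y →
      ∃! z : G, (1 : G) ⋖ z ∧ x * z ≤ x ⊔ y)
    -- rigidity condition (2)
    (rig2 : ∀ x z₁ z₂ : G, (1 : G) ⋖ x →
      ((1 : G) ⋖ z₁ ∧ ∀ y : G, (1 : G) ⋖ y → ¬ x * z₁ ≤ x ⊔ y) →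
      ((1 : G) ⋖ z₂ ∧ ∀ y : G, (1 : G) ⋖ y → ¬ x * z₂ ≤ x ⊔ y) → z₁ = z₂)
    (φ : G ≃o G) (hfix : ∀ x : G, (1 : G) ⋖ x → φ x = x) :
    ∀ g : G, 1 ≤ g → φ g = g := by
  -- Step 1 : φ 1 = 1
  have hone : φ 1 = 1 := by
    by_cases hd : ∃ x y : G, ((1:G) ⋖ x) ∧ ((1:G) ⋖ y) ∧ x ≠ y
    · obtain ⟨x, y, hx, hy, hxy⟩ := hd
      have hmeet : x ⊓ y = 1 := by
        by_contra hne
        have h1lt : (1:G) < x ⊓ y := lt_of_le_of_ne (le_inf hx.1.le hy.1.le) (Ne.symm hne)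
        have hxx : x ⊓ y = x := by
          rcases lt_or_eq_of_le (inf_le_left : x ⊓ y ≤ x) with h | h
          · exact absurd h (hx.2 h1lt)
          · exact h
        have hxley : x ≤ y := hxx ▸ inf_le_right
        have : x < y := lt_of_le_of_ne hxley hxy
        exact hy.2 hx.1 this
      calc φ 1 = φ (x ⊓ y) := by rw [hmeet]
        _ = φ x ⊓ φ y := map_inf φ x y
        _ = x ⊓ y := by rw [hfix x hx, hfix y hy]
        _ = 1 := hmeet
    · push_neg at hd
      by_cases he : ∃ x : G, (1:G) ⋖ x
      · obtain ⟨x, hx⟩ := he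
        have h1 : φ 1 ⋖ x := by
          have := (apply_covBy_apply_iff φ).2 hx
          rwa [hfix x hx] at this
        have h2 : (1:G) ⋖ (φ 1)⁻¹ * x := covBy_one_mul h1
        have h3 : (φ 1)⁻¹ * x = x := hd _ x h2 hx
        have h4 : (φ 1)⁻¹ * x = 1 * x := by rw [h3, one_mul]
        have : (φ 1)⁻¹ = 1 := mul_right_cancel h4
        simpa [inv_eq_one] using this
      · push_neg at he
        have htriv : ∀ a : G, a = 1 := by
          have hle1 : ∀ b : G, b ≤ 1 := by
            intro b
            rcases eq_or_lt_of_le (le_sup_right : (1:G) ≤ b ⊔ 1) with h | h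
            · exact le_of_sup_eq h.symm
            · obtain ⟨x, hx, -⟩ := exists_atom_le hdesc h
              exact absurd hx (he x)
          intro a
          have h1 : a ≤ 1 := hle1 a
          have h2 : a⁻¹ ≤ 1 := hle1 a⁻¹
          have h3 : (1:G) ≤ a⁻¹ := by
            have := mul_le_mul_right h1 a⁻¹
            simpa using this
          have : a⁻¹ = 1 := le_antisymm h2 h3
          simpa [inv_eq_one] using this
        exact htriv _
  -- Step 2 : φ fixes every product of atoms
  have hmain : ∀ N (g : G), IsProdAtoms N g → φ g = g := by
    intro N
    induction N with
    | zero => intro g hg; rw [show g = 1 from hg]; exact hone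
    | succ N ih =>
      rintro g ⟨a, z, hPa, hz, rfl⟩
      have hφa : φ a = a := ih a hPa
      match N, hPa with
      | 0, hPa =>
        rw [show a = 1 from hPa, one_mul]
        exact hfix z hz
      | Nat.succ m, hPa =>
        obtain ⟨a', u, hPa', hu, rfl⟩ := hPa
        -- a = a' * u
        have hcov : a' * u ⋖ a' * u * z := by
          have := mulLeft_covBy (a' * u) hz
          simpa [mul_assoc, mul_one] using this
        have hcov' : a' * u ⋖ φ (a' * u * z) := by
          have := (apply_covBy_apply_iff φ).2 hcov
          rwa [hφa] at this
        set z' := (a' * u)⁻¹ * φ (a' * u * z) with hz'def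
        have hz' : (1:G) ⋖ z' := covBy_one_mul hcov'
        have hφw : φ (a' * u * z) = a' * u * z' := by
          rw [hz'def, mul_inv_cancel_left]
        -- translation helper
        have trans_le : ∀ t y : G, u * t ≤ u ⊔ y ↔ a' * u * t ≤ (a' * u) ⊔ (a' * y) := by
          intro t y
          rw [mul_assoc, ← mul_sup u y a', mul_le_mul_iff_left]
        by_cases hcase : ∃ y : G, (1:G) ⋖ y ∧ u * z ≤ u ⊔ y
        · obtain ⟨y, hy, hle⟩ := hcase
          have hne : u ≠ y := by
            intro h
            rw [← h, sup_idem] at hle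
            have : u < u * z := by
              have := (OrderIso.mulLeft u).lt_iff_lt.2 hz.1
              simpa using this
            exact absurd hle (not_le_of_gt this)
          have hfay : φ (a' * y) = a' * y := ih (a' * y) ⟨a', y, hPa', hy, rfl⟩
          have h1 : a' * u * z ≤ (a' * u) ⊔ (a' * y) := (trans_le z y).1 hle
          have h2 : a' * u * z' ≤ (a' * u) ⊔ (a' * y) := by
            rw [← hφw]
            calc φ (a' * u * z) ≤ φ ((a' * u) ⊔ (a' * y)) := φ.le_iff_le.2 h1
              _ = φ (a' * u) ⊔ φ (a' * y) := map_sup φ _ _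
              _ = (a' * u) ⊔ (a' * y) := by rw [hφa, hfay]
          have hle' : u * z' ≤ u ⊔ y := (trans_le z' y).2 h2
          obtain ⟨t, -, huniq⟩ := rig1 u y hu hy hne
          have e1 : z = t := huniq z ⟨hz, hle⟩
          have e2 : z' = t := huniq z' ⟨hz', hle'⟩
          rw [hφw, e2, ← e1]
        · push_neg at hcase
          have hcase' : ∀ y : G, (1:G) ⋖ y → ¬ u * z' ≤ u ⊔ y := by
            intro y hy hle'
            have h2 : φ (a' * u * z) ≤ (a' * u) ⊔ (a' * y) := by
              rw [hφw]; exact (trans_le z' y).1 hle'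
            have hfay : φ (a' * y) = a' * y := ih (a' * y) ⟨a', y, hPa', hy, rfl⟩
            have h3 : a' * u * z ≤ (a' * u) ⊔ (a' * y) := by
              have := φ.symm.le_iff_le.2 h2
              rwa [φ.symm_apply_apply, map_sup, φ.symm_apply_eq.2 hφa.symm,
                φ.symm_apply_eq.2 hfay.symm] at this
            exact hcase y hy ((trans_le z y).2 h3)
          have : z = z' := rig2 u z z' hu ⟨hz, hcase⟩ ⟨hz', hcase'⟩
          rw [hφw, ← this]
  intro g hg
  obtain ⟨N, hN⟩ := exists_isProdAtoms hasc hdesc hg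
  exact hmain N g hN
end

section
/- Let G be a left-ordered group. Then the assignments (1) (G,H,ι) ↦ the regular subgroup ι L_H ι^{-1} ≤ Aut(G,≤), and (2) a regular subgroup H ≤ Aut(G,≤) ↦ the I_G-formation (G, H', ι_H) where π ≤ ρ iff π(e) ≤ ρ(e) and ι_H(π) = π(e), are mutually inverse bijections between equivalence classes of I_G-formations and regular subgroups of Aut(G,≤). -/
/-- The group of order-automorphisms of a left-ordered group, as a subgroup of
the permutation group. -/
def ordAut (G : Type*) [Group G] [PartialOrder G] : Subgroup (Equiv.Perm G) where
  carrier := {π : Equiv.Perm G | ∀ a b : G, π a ≤ π b ↔ a ≤ b}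
  one_mem' := fun _ _ => Iff.rfl
  mul_mem' := by
    intro π ρ hπ hρ a b
    exact (hπ (ρ a) (ρ b)).trans (hρ a b)
  inv_mem' := by
    intro π hπ a b
    have := (hπ (π⁻¹ a) (π⁻¹ b)).symm
    simpa using this

/-- The correspondence between `I_G`-formations and regular subgroups of
`Aut(G,≤)`: (1) every `I_G`-formation `(G,H,ι)` yields the regular subgroup
`ι L_H ι⁻¹ ≤ Aut(G,≤)`, and the formation obtained back from this subgroup is
equivalent to `(G,H,ι)`; (2) every regular subgroup `K ≤ Aut(G,≤)`, with the
order `π ≤ ρ ↔ π 1 ≤ ρ 1`, is a left-ordered group whose assigned regular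
subgroup is `K` itself. -/
theorem correspondence_regular_subgroups_IG_formations {G : Type*} [Group G]
    [PartialOrder G] [CovariantClass G G (· * ·) (· ≤ ·)] :
    -- (1) from formations to regular subgroups and back
    (∀ (H : Type*) [Group H] [PartialOrder H]
        [CovariantClass H H (· * ·) (· ≤ ·)] (ι : H ≃o G), ι 1 = 1 →
      ∃ K : Subgroup (Equiv.Perm G),
        (K : Set (Equiv.Perm G)) = {π | ∃ h : H, ∀ x : G, π x = ι (h * ι.symm x)} ∧
        K ≤ ordAut G ∧
        (∀ x y : G, ∃! π : Equiv.Perm G, π ∈ K ∧ π x = y) ∧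
        -- the formation obtained from `K` is equivalent to `(G,H,ι)`
        ∃ f : H ≃* K,
          (∀ a b : H, a ≤ b ↔ ((f a : Equiv.Perm G) 1 ≤ (f b : Equiv.Perm G) 1)) ∧
          (∀ h : H, (f h : Equiv.Perm G) 1 = ι h)) ∧
    -- (2) from regular subgroups to formations and back
    (∀ K : Subgroup (Equiv.Perm G), K ≤ ordAut G →
      (∀ x y : G, ∃! π : Equiv.Perm G, π ∈ K ∧ π x = y) →
      -- the induced order on `K` is a left-invariant partial order
      ((∀ k k₁ k₂ : K, (k₁ : Equiv.Perm G) 1 ≤ (k₂ : Equiv.Perm G) 1 →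
          ((k * k₁ : K) : Equiv.Perm G) 1 ≤ ((k * k₂ : K) : Equiv.Perm G) 1) ∧
       (∀ k₁ k₂ : K, (k₁ : Equiv.Perm G) 1 ≤ (k₂ : Equiv.Perm G) 1 →
          (k₂ : Equiv.Perm G) 1 ≤ (k₁ : Equiv.Perm G) 1 → k₁ = k₂) ∧
       -- the regular subgroup assigned to this formation is `K` itself
       (∀ π : Equiv.Perm G, π ∈ K ↔
          ∃ k ∈ K, ∀ ρ ∈ K, π (ρ 1) = k (ρ 1)))) := by
  constructor
  · intro H _ _ _ ι hι
    -- the homomorphism `h ↦ ι ∘ (h * ·) ∘ ι.symm`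
    set φ : H →* Equiv.Perm G :=
      { toFun := fun h => ι.toEquiv.symm.trans ((Equiv.mulLeft h).trans ι.toEquiv)
        map_one' := by ext x; simp
        map_mul' := by intro h₁ h₂; ext x; simp [mul_assoc] } with hφ
    have hφ_apply : ∀ (h : H) (x : G), φ h x = ι (h * ι.symm x) := fun h x => rfl
    have hsymm1 : ι.symm 1 = 1 := by
      rw [← hι]; exact ι.symm_apply_apply 1
    refine ⟨φ.range, ?_, ?_, ?_, ?_⟩
    · ext π
      simp only [MonoidHom.coe_range, Set.mem_range, Set.mem_setOf_eq]
      constructor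
      · rintro ⟨h, rfl⟩; exact ⟨h, fun x => rfl⟩
      · rintro ⟨h, hh⟩; exact ⟨h, (Equiv.ext fun x => (hh x).symm)⟩
    · rintro π ⟨h, rfl⟩ a b
      simp only [hφ_apply]
      rw [ι.le_iff_le]
      constructor
      · intro hle
        have := mul_le_mul_right hle h⁻¹
        simpa [← mul_assoc] using (ι.symm.le_iff_le.mp (by simpa using this))
      · intro hle
        exact mul_le_mul_right (ι.symm.le_iff_le.mpr hle) h
    · intro x y
      refine ⟨φ (ι.symm y * (ι.symm x)⁻¹), ⟨⟨_, rfl⟩, ?_⟩, ?_⟩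
      · rw [hφ_apply]; simp [mul_assoc]
      · rintro π ⟨⟨h, rfl⟩, hx⟩
        have : h = ι.symm y * (ι.symm x)⁻¹ := by
          have : ι (h * ι.symm x) = y := hx
          have h2 : h * ι.symm x = ι.symm y := by
            rw [← this]; exact (ι.symm_apply_apply _).symm
          rw [← h2]; group
        rw [this]
    · have hinj : Function.Injective φ := by
        intro h₁ h₂ he
        have := congrArg (fun π : Equiv.Perm G => π 1) he
        simp only [hφ_apply, hsymm1, mul_one] at this
        exact ι.injective this
      refine ⟨MonoidHom.ofInjective hinj, ?_, ?_⟩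
      · intro a b
        have h1 : ∀ h : H, ((MonoidHom.ofInjective hinj h : φ.range) : Equiv.Perm G) 1
            = ι h := by
          intro h
          show φ h 1 = ι h
          simp [hφ_apply, hsymm1]
        rw [h1, h1, ι.le_iff_le]
      · intro h
        show φ h 1 = ι h
        simp [hφ_apply, hsymm1]
  · intro K hK hreg
    refine ⟨?_, ?_, ?_⟩
    · intro k k₁ k₂ hle
      exact (hK k.2 _ _).mpr hle
    · intro k₁ k₂ h1 h2
      have he : (k₁ : Equiv.Perm G) 1 = (k₂ : Equiv.Perm G) 1 := le_antisymm h1 h2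
      obtain ⟨π, _, huniq⟩ := hreg 1 ((k₂ : Equiv.Perm G) 1)
      have e1 : (k₁ : Equiv.Perm G) = π := huniq _ ⟨k₁.2, he⟩
      have e2 : (k₂ : Equiv.Perm G) = π := huniq _ ⟨k₂.2, rfl⟩
      exact Subtype.ext (e1.trans e2.symm)
    · intro π
      constructor
      · intro hπ
        exact ⟨π, hπ, fun ρ _ => rfl⟩
      · rintro ⟨k, hk, hagree⟩
        have hsurj : ∀ y : G, ∃ ρ ∈ K, ρ 1 = y := by
          intro y
          obtain ⟨ρ, ⟨hρ, h1⟩, _⟩ := hreg 1 y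
          exact ⟨ρ, hρ, h1⟩
        have : π = k := by
          ext y
          obtain ⟨ρ, hρ, rfl⟩ := hsurj y
          exact hagree ρ hρ
        rw [this]; exact hk
end

section
/- If a skew brace B is right-nilpotent of degree ≤ 2, then the λ-map, viewed as a map (B,+) → Aut(B,+), g ↦ λ_g, is a group homomorphism from the additive group, and satisfies λ_{λ_a(b)} = λ_b for all a, b ∈ B. -/
/-- A skew brace structure on a group `(B, *)` (playing the role of the
additive group, written multiplicatively) is a second group operation `circ`
with the same identity, satisfying `a ∘ (b * c) = (a ∘ b) * a⁻¹ * (a ∘ c)`. -/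
def IsSkewBrace {B : Type*} [Group B] (circ : B → B → B) : Prop :=
  (∀ a b c : B, circ (circ a b) c = circ a (circ b c)) ∧
  (∀ a : B, circ 1 a = a) ∧ (∀ a : B, circ a 1 = a) ∧
  (∀ a : B, ∃ b : B, circ b a = 1) ∧
  (∀ a b c : B, circ a (b * c) = circ a b * a⁻¹ * circ a c)

/-- The λ-action of a skew brace: `λ_g h = g⁻¹ * (g ∘ h)` (additively,
`λ_g(h) = -g + g ∘ h`). -/
def lam {B : Type*} [Group B] (circ : B → B → B) (g h : B) : B := g⁻¹ * circ g h

/-- The socle of a skew brace: elements `g` with `g ∘ h = g * h` for all `h`. -/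
def socle {B : Type*} [Group B] (circ : B → B → B) : Set B :=
  {g : B | ∀ h : B, circ g h = g * h}



section Aux
variable {B : Type*} [Group B] {circ : B → B → B}

lemma sb_inv (hB : IsSkewBrace circ) (a : B) : ∃ b : B, circ b a = 1 ∧ circ a b = 1 := by
  obtain ⟨assoc, one_c, c_one, inv, dist⟩ := hB
  obtain ⟨b, hb⟩ := inv a
  obtain ⟨c, hc⟩ := inv b
  have hca : a = c := by
    have h := assoc c b a
    rw [hc, hb, one_c, c_one] at h
    exact h
  exact ⟨b, hb, hca ▸ hc⟩

lemma sb_lam_circ (hB : IsSkewBrace circ) (a b c : B) :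
    lam circ (circ a b) c = lam circ a (lam circ b c) := by
  obtain ⟨assoc, one_c, c_one, inv, dist⟩ := hB
  have hinv : circ a b⁻¹ = a * (circ a b)⁻¹ * a := by
    have h := dist a b b⁻¹
    rw [mul_inv_cancel, c_one] at h
    calc circ a b⁻¹ = a * (circ a b)⁻¹ * (circ a b * a⁻¹ * circ a b⁻¹) := by group
      _ = a * (circ a b)⁻¹ * a := by rw [← h]
  simp only [lam]
  rw [dist a b⁻¹ (circ b c), hinv, ← assoc]
  group

lemma sb_lam_one (hB : IsSkewBrace circ) (c : B) : lam circ 1 c = c := by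
  simp [lam, hB.2.1]

/-- socle is λ-invariant. -/
lemma sb_socle_lam (hB : IsSkewBrace circ)
    (hrn2 : ∀ a b : B, (a * b)⁻¹ * circ a b ∈ socle circ)
    (g t : B) (ht : t ∈ socle circ) : lam circ g t ∈ socle circ := by
  obtain ⟨assoc, one_c, c_one, inv, dist⟩ := hB
  have hu : (g * t)⁻¹ * circ g t ∈ socle circ := hrn2 g t
  set u := (g * t)⁻¹ * circ g t with hu_def
  have hgt : lam circ g t = t * u := by
    simp only [lam, hu_def]; group
  intro h
  rw [hgt]
  have h1 : circ (t * u) h = circ (circ t u) h := by rw [ht u]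
  rw [h1, assoc, hu h, ht]
  simp only [hu_def]
  group

/-- λ of g*t equals λ of g, for t ∈ socle. -/
lemma sb_lam_mul_socle (hB : IsSkewBrace circ)
    (hrn2 : ∀ a b : B, (a * b)⁻¹ * circ a b ∈ socle circ)
    (g t : B) (ht : t ∈ socle circ) (c : B) : lam circ (g * t) c = lam circ g c := by
  obtain ⟨gb, hgb1, hgb2⟩ := sb_inv hB g
  have hfix : lam circ g (lam circ gb t) = t := by
    rw [← sb_lam_circ hB, hgb2, sb_lam_one hB]
  have hmem : lam circ gb t ∈ socle circ := sb_socle_lam hB hrn2 gb t ht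
  have hgt : circ g (lam circ gb t) = g * t := by
    have : g * lam circ g (lam circ gb t) = g * t := by rw [hfix]
    simpa [lam, mul_assoc] using this
  have hid : lam circ (lam circ gb t) c = c := by
    rw [lam, hmem c]; group
  rw [← hgt, sb_lam_circ hB, hid]

end Aux

/-- If a skew brace is right-nilpotent of degree ≤ 2 (i.e. `B/Soc(B)` is a
trivial skew brace), then the λ-map is a group homomorphism from the additive
group `(B, *)` to `Aut(B, *)`, and `λ_{λ_a(b)} = λ_b` for all `a, b`. -/
theorem lam_additive_hom_of_right_nilpotent {B : Type*} [Group B]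
    (circ : B → B → B) (hB : IsSkewBrace circ)
    (hrn2 : ∀ a b : B, (a * b)⁻¹ * circ a b ∈ socle circ) :
    (∀ a b c : B, lam circ (a * b) c = lam circ a (lam circ b c)) ∧
    (∀ a b c : B, lam circ (lam circ a b) c = lam circ b c) := by
  constructor
  · intro a b c
    have hs : (a * b)⁻¹ * circ a b ∈ socle circ := hrn2 a b
    set s := (a * b)⁻¹ * circ a b with hs_def
    -- s⁻¹ ∈ socle
    have hsinv : s⁻¹ ∈ socle circ := by
      have h1 : circ s s⁻¹ = 1 := by rw [hs s⁻¹]; group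
      intro h
      have h2 : lam circ s (lam circ s⁻¹ h) = h := by
        rw [← sb_lam_circ hB, h1, sb_lam_one hB]
      have h3 : lam circ s (lam circ s⁻¹ h) = lam circ s⁻¹ h := by
        rw [lam, hs]; group
      rw [h3, lam] at h2
      calc circ s⁻¹ h = s⁻¹ * (s⁻¹⁻¹ * circ s⁻¹ h) := by group
        _ = s⁻¹ * h := by rw [h2]
    have hab : a * b = circ a b * s⁻¹ := by rw [hs_def]; group
    rw [hab, sb_lam_mul_socle hB hrn2 _ _ hsinv, sb_lam_circ hB]
  · intro a b c
    have hu : (a * b)⁻¹ * circ a b ∈ socle circ := hrn2 a b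
    have hab : lam circ a b = b * ((a * b)⁻¹ * circ a b) := by
      simp only [lam]; group
    rw [hab, sb_lam_mul_socle hB hrn2 _ _ hu]
end

section
/- Let (B,+) be a group and α : (B,+) → Aut(B,+), a ↦ α_a, a group homomorphism satisfying α_{α_a(b)} = α_b for all a, b ∈ B. Define a ∘ b = a + α_a(b). Then (B, +, ∘) is a skew brace, and it is right-nilpotent of degree ≤ 2. -/
/-- Given a group `(B, *)` (the additive group, written multiplicatively) and a
group homomorphism `α : B →* Aut(B)` with `α_{α_a(b)} = α_b`, the operation
`a ∘ b = a * α_a(b)` makes `(B, *, ∘)` a skew brace that is right-nilpotent of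
degree ≤ 2 (i.e. `B/Soc(B)` is a trivial skew brace). -/
theorem skew_brace_from_invariant_action {B : Type*} [Group B]
    (α : B →* MulAut B) (hinv : ∀ a b : B, α (α a b) = α b) :
    IsSkewBrace (fun a b : B => a * α a b) ∧
    (∀ a b : B, (a * b)⁻¹ * (a * α a b) ∈ socle (fun a b : B => a * α a b)) := by
  constructor
  · refine ⟨?_, ?_, ?_, ?_, ?_⟩
    · intro a b c
      simp only [map_mul, hinv, MulAut.mul_apply, mul_assoc]
    · intro a; simp
    · intro a; simp
    · intro a
      refine ⟨α a⁻¹ a⁻¹, ?_⟩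
      have h : α (α a⁻¹ a⁻¹) = α a⁻¹ := hinv _ _
      simp only [h, ← map_mul, inv_mul_cancel, map_one]
    · intro a b c
      simp [map_mul, mul_assoc]
  · intro a b h
    have hg : α ((a * b)⁻¹ * (a * α a b)) = 1 := by
      simp only [map_mul, map_inv, hinv]
      group
    simp only [socle, Set.mem_setOf_eq] at *
    rw [hg]
    simp [mul_assoc]
end

section
/- Let (G,+) be a group and A ≤ Aut(G,+). The Guarnieri–Vendramin correspondence between skew brace structures on (G,+) and regular subgroups of Hol(G,+) restricts to a bijection between regular subgroups of G ⋊ A and skew brace structures (G,+,∘) whose λ-map has image contained in A. -/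
lemma IsSkewBrace.exists_inv {B : Type*} [Group B] {circ : B → B → B}
    (hB : IsSkewBrace circ) (a : B) : ∃ b : B, circ b a = 1 ∧ circ a b = 1 := by
  obtain ⟨assoc, one_circ, circ_one, linv, -⟩ := hB
  obtain ⟨b, hb⟩ := linv a
  obtain ⟨c, hc⟩ := linv b
  refine ⟨b, hb, ?_⟩
  calc circ a b = circ 1 (circ a b) := (one_circ _).symm
    _ = circ (circ c b) (circ a b) := by rw [hc]
    _ = circ c (circ b (circ a b)) := assoc ..
    _ = circ c (circ (circ b a) b) := by rw [assoc]
    _ = circ c b := by rw [hb, one_circ]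
    _ = 1 := hc

/-- Left translation by `g` in the circle group, as a permutation. -/
noncomputable def bracePerm {B : Type*} [Group B] {circ : B → B → B}
    (hB : IsSkewBrace circ) (g : B) : Equiv.Perm B where
  toFun := circ g
  invFun := circ (Classical.choose (hB.exists_inv g))
  left_inv x := by
    rw [← hB.1, (Classical.choose_spec (hB.exists_inv g)).1, hB.2.1]
  right_inv x := by
    rw [← hB.1, (Classical.choose_spec (hB.exists_inv g)).2, hB.2.1]

/-- The Guarnieri–Vendramin correspondence between skew brace structures on a
group `(G, *)` and regular subgroups of `Hol(G) = L_G ⋊ Aut(G)` restricts, for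
any `A ≤ Aut(G)`, to a bijection between regular subgroups of `G ⋊ A`
(realized inside `Perm G` as permutations `x ↦ g * α x` with `α ∈ A`) and skew
brace structures with `im(λ) ≤ A`. -/
theorem restrict_lambda_correspondence {G : Type*} [Group G] (A : Subgroup (MulAut G)) :
    -- from a skew brace structure with `im λ ≤ A` to a regular subgroup of `G ⋊ A`
    (∀ circ : G → G → G, IsSkewBrace circ →
      (∀ g : G, ∃ α ∈ A, ∀ h : G, (α : MulAut G) h = lam circ g h) →
      ∃ H : Subgroup (Equiv.Perm G),
        (H : Set (Equiv.Perm G)) = {π : Equiv.Perm G | ∃ g : G, ∀ x : G, π x = circ g x} ∧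
        (∀ x y : G, ∃! π : Equiv.Perm G, π ∈ H ∧ π x = y) ∧
        (∀ π ∈ H, ∃ g : G, ∃ α ∈ A, ∀ x : G, π x = g * (α : MulAut G) x)) ∧
    -- from a regular subgroup of `G ⋊ A` to a skew brace structure with `im λ ≤ A`
    (∀ H : Subgroup (Equiv.Perm G),
      (∀ x y : G, ∃! π : Equiv.Perm G, π ∈ H ∧ π x = y) →
      (∀ π ∈ H, ∃ g : G, ∃ α ∈ A, ∀ x : G, π x = g * (α : MulAut G) x) →
      ∃! circ : G → G → G,
        IsSkewBrace circ ∧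
        (∀ g : G, ∃ α ∈ A, ∀ h : G, (α : MulAut G) h = lam circ g h) ∧
        (∀ π ∈ H, ∀ h : G, circ (π 1) h = π h) ∧
        (∀ π : Equiv.Perm G, π ∈ H ↔ ∃ g : G, ∀ x : G, π x = circ g x)) := by
  constructor
  · -- Direction 1
    intro circ hB hlam
    obtain ⟨assoc, one_circ, circ_one, -, -⟩ := id hB
    refine ⟨{ carrier := {π : Equiv.Perm G | ∃ g : G, ∀ x : G, π x = circ g x}
              mul_mem' := ?_
              one_mem' := ⟨1, fun x => (one_circ x).symm⟩
              inv_mem' := ?_ }, rfl, ?_, ?_⟩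
    · rintro π ρ ⟨g, hg⟩ ⟨h, hh⟩
      exact ⟨circ g h, fun x => by
        simp only [Equiv.Perm.mul_apply, hg, hh, assoc]⟩
    · rintro π ⟨g, hg⟩
      obtain ⟨b, -, hb⟩ := hB.exists_inv g
      refine ⟨b, fun x => ?_⟩
      have : π (circ b x) = x := by rw [hg, ← assoc, hb, one_circ]
      exact (π.injective (by rw [← Equiv.Perm.mul_apply, mul_inv_cancel, Equiv.Perm.one_apply, this])).symm
    · -- regularity
      intro x y
      obtain ⟨b, hbx, hxb⟩ := hB.exists_inv x
      refine ⟨bracePerm hB (circ y b), ⟨⟨circ y b, fun z => rfl⟩, ?_⟩, ?_⟩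
      · show circ (circ y b) x = y
        rw [assoc, hbx, circ_one]
      · rintro π ⟨⟨g, hg⟩, hx⟩
        have hgy : g = circ y b := by
          have : circ g x = y := by rw [← hg]; exact hx
          calc g = circ g 1 := (circ_one g).symm
            _ = circ g (circ x b) := by rw [hxb]
            _ = circ (circ g x) b := (assoc ..).symm
            _ = circ y b := by rw [this]
        exact Equiv.ext fun z => by rw [hg, hgy]; rfl
    · rintro π ⟨g, hg⟩
      obtain ⟨α, hα, hαg⟩ := hlam g
      refine ⟨g, α, hα, fun x => ?_⟩
      rw [hg, hαg, lam, mul_inv_cancel_left]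
  · -- Direction 2
    intro H hreg haff
    classical
    -- T g : the unique element of H sending 1 to g
    set T : G → Equiv.Perm G := fun g => Classical.choose (hreg 1 g) with hT
    have hTmem : ∀ g, T g ∈ H := fun g => (Classical.choose_spec (hreg 1 g)).1.1
    have hTone : ∀ g, T g 1 = g := fun g => (Classical.choose_spec (hreg 1 g)).1.2
    have hTuniq : ∀ g, ∀ π ∈ H, π 1 = g → π = T g := fun g π hm h1 =>
      (Classical.choose_spec (hreg 1 g)).2 π ⟨hm, h1⟩
    set circ : G → G → G := fun g h => T g h with hcirc
    -- affine form: T a x = a * α x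
    have haffT : ∀ a : G, ∃ α ∈ A, ∀ x : G, T a x = a * (α : MulAut G) x := by
      intro a
      obtain ⟨g, α, hα, hg⟩ := haff (T a) (hTmem a)
      have hga : g = a := by
        have := hg 1
        rw [hTone a, map_one, mul_one] at this
        exact this.symm
      exact ⟨α, hα, fun x => by rw [hg x, hga]⟩
    -- multiplicativity of T
    have hTmul : ∀ g h : G, T (circ g h) = T g * T h := by
      intro g h
      refine (hTuniq _ _ (H.mul_mem (hTmem g) (hTmem h)) ?_).symm
      show T g (T h 1) = circ g h
      rw [hTone h]
    have hBrace : IsSkewBrace circ := by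
      refine ⟨?_, ?_, ?_, ?_, ?_⟩
      · intro a b c
        show T (circ a b) c = T a (T b c)
        rw [hTmul]; rfl
      · intro a
        have h1 : (1 : Equiv.Perm G) = T 1 := hTuniq 1 1 H.one_mem rfl
        show T 1 a = a
        rw [← h1]
        rfl
      · exact hTone
      · intro a
        refine ⟨(T a)⁻¹ 1, ?_⟩
        have : (T a)⁻¹ = T ((T a)⁻¹ 1) := hTuniq _ _ (H.inv_mem (hTmem a)) rfl
        show T ((T a)⁻¹ 1) a = 1
        rw [← this]
        have h2 := congrArg (⇑(T a)⁻¹) (hTone a)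
        rw [← Equiv.Perm.mul_apply, inv_mul_cancel, Equiv.Perm.one_apply] at h2
        exact h2.symm
      · intro a b c
        obtain ⟨α, hα, hαa⟩ := haffT a
        show T a (b * c) = T a b * a⁻¹ * T a c
        rw [hαa, hαa, hαa, map_mul]
        group
    refine ⟨circ, ⟨hBrace, ?_, ?_, ?_⟩, ?_⟩
    · intro g
      obtain ⟨α, hα, hαg⟩ := haffT g
      exact ⟨α, hα, fun h => by rw [lam]; show _ = g⁻¹ * T g h; rw [hαg, inv_mul_cancel_left]⟩
    · intro π hπ h
      show T (π 1) h = π h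
      rw [← hTuniq (π 1) π hπ rfl]
    · intro π
      constructor
      · intro hπ
        exact ⟨π 1, fun x => by show π x = T (π 1) x; rw [← hTuniq (π 1) π hπ rfl]⟩
      · rintro ⟨g, hg⟩
        have : π = T g := Equiv.ext fun x => hg x
        rw [this]; exact hTmem g
    · -- uniqueness
      rintro circ' ⟨-, -, hcirc'3, -⟩
      funext g h
      have := hcirc'3 (T g) (hTmem g) h
      rw [hTone g] at this
      exact this
end
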